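/- Let c and d be phase matrices. Suppose there exist phase matrices e and f such that c(n,m) = d(n,m)·e(n,m) and d(n,m) = c(n,m)·f(n,m) for all n, m ∈ ℕ. Then there exists a sequence of reals (υ_n)_{n∈ℕ} such that c(n,m) = d(n,m)·e^{i(υ_n − υ_m)} for all n, m ∈ ℕ. -/

import Mathlib

open scoped ComplexConjugate ComplexOrder

noncomputable section

abbrev H : Type := lp (fun _ : ℕ => ℂ) 2

def e (n : ℕ) : H := lp.single 2 n (1 : ℂ)

def IsPosSemidef (c : ℕ × ℕ → ℂ) : Prop :=
  ∀ f : ℕ →₀ ℂ, 0 ≤ ∑ n ∈ f.support, ∑ m ∈ f.support, conj (f n) * c (n, m) * f m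

def IsPhaseMatrix (c : ℕ × ℕ → ℂ) : Prop :=
  (∀ n, c (n, n) = 1) ∧ IsPosSemidef c


lemma qpos {c : ℕ × ℕ → ℂ} (hc : IsPosSemidef c) (s : Finset ℕ) (f : ℕ →₀ ℂ)
    (hs : f.support ⊆ s) :
    0 ≤ ∑ n ∈ s, ∑ m ∈ s, conj (f n) * c (n, m) * f m := by
  have inner : ∀ n : ℕ, ∑ m ∈ f.support, conj (f n) * c (n, m) * f m
      = ∑ m ∈ s, conj (f n) * c (n, m) * f m := by
    intro n
    refine Finset.sum_subset hs fun x _ hx => ?_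
    rw [Finsupp.notMem_support_iff.mp hx, mul_zero]
  have outer : ∑ n ∈ f.support, ∑ m ∈ s, conj (f n) * c (n, m) * f m
      = ∑ n ∈ s, ∑ m ∈ s, conj (f n) * c (n, m) * f m := by
    refine Finset.sum_subset hs fun x _ hx => ?_
    refine Finset.sum_eq_zero fun m _ => ?_
    rw [Finsupp.notMem_support_iff.mp hx, map_zero, zero_mul, zero_mul]
  calc (0:ℂ) ≤ _ := hc f
    _ = _ := by rw [← outer]; exact Finset.sum_congr rfl fun n _ => inner n

lemma q2 {c : ℕ × ℕ → ℂ} (hc : IsPosSemidef c) {n m : ℕ} (hnm : n ≠ m) (a b : ℂ) :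
    0 ≤ conj a * c (n, n) * a + conj a * c (n, m) * b
      + (conj b * c (m, n) * a + conj b * c (m, m) * b) := by
  set f : ℕ →₀ ℂ := Finsupp.single n a + Finsupp.single m b with hf
  have hfn : f n = a := by simp [hf, Finsupp.single_apply, hnm, hnm.symm]
  have hfm : f m = b := by simp [hf, Finsupp.single_apply, hnm, hnm.symm]
  have hsupp : f.support ⊆ {n, m} := by
    refine Finsupp.support_add.trans ?_
    refine Finset.union_subset ?_ ?_ <;> refine Finsupp.support_single_subset.trans ?_ <;> simp
  have := qpos hc {n, m} f hsupp
  rwa [Finset.sum_pair hnm, Finset.sum_pair hnm, Finset.sum_pair hnm, hfn, hfm] at this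

lemma herm {c : ℕ × ℕ → ℂ} (hdiag : ∀ n, c (n, n) = 1) (hc : IsPosSemidef c) (n m : ℕ) :
    c (m, n) = conj (c (n, m)) := by
  rcases eq_or_ne n m with rfl | hnm
  · rw [hdiag, map_one]
  have H1 := q2 hc hnm 1 1
  have H2 := q2 hc hnm 1 Complex.I
  rw [hdiag, hdiag] at H1 H2
  simp only [map_one, one_mul, mul_one, Complex.le_def] at H1 H2
  obtain ⟨-, H1⟩ := H1
  obtain ⟨-, H2⟩ := H2
  have h1 : (c (n, m)).im + (c (m, n)).im = 0 := by
    simpa [Complex.add_im] using H1.symm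
  have h2 : (c (n, m)).re - (c (m, n)).re = 0 := by
    simp only [Complex.add_im, Complex.mul_im, Complex.I_re, Complex.I_im, Complex.neg_re,
      Complex.neg_im, Complex.zero_im, Complex.one_im, Complex.one_re, map_one,
      Complex.conj_I] at H2
    have := H2.symm
    push_cast at this ⊢
    nlinarith [this]
  apply Complex.ext
  · simpa [Complex.conj_re] using by linarith
  · simp only [Complex.conj_im]; linarith

lemma abs_le_one {c : ℕ × ℕ → ℂ} (hdiag : ∀ n, c (n, n) = 1) (hc : IsPosSemidef c)
    (n m : ℕ) : ‖c (n, m)‖ ≤ 1 := by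
  rcases eq_or_ne n m with rfl | hnm
  · rw [hdiag]; simp
  have H := q2 hc hnm 1 (-(conj (c (n, m))))
  rw [hdiag, hdiag, herm hdiag hc n m] at H
  have hQ : conj (1:ℂ) * 1 * 1 + conj (1:ℂ) * c (n, m) * -(conj (c (n, m)))
      + (conj (-(conj (c (n, m)))) * conj (c (n, m)) * 1
        + conj (-(conj (c (n, m)))) * 1 * -(conj (c (n, m))))
      = 1 - (Complex.normSq (c (n, m)) : ℂ) := by
    simp only [map_one, map_neg, Complex.conj_conj, one_mul, mul_one, mul_neg, neg_mul,
      neg_neg]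
    rw [Complex.mul_conj]
    ring
  rw [hQ, Complex.le_def] at H
  have hre : Complex.normSq (c (n, m)) ≤ 1 := by
    have := H.1
    simp only [Complex.zero_re, Complex.sub_re, Complex.one_re, Complex.ofReal_re] at this
    linarith
  rw [Complex.norm_def]
  calc Real.sqrt (Complex.normSq (c (n, m))) ≤ Real.sqrt 1 := Real.sqrt_le_sqrt hre
    _ = 1 := Real.sqrt_one

lemma q3 {c : ℕ × ℕ → ℂ} (hc : IsPosSemidef c) {n k m : ℕ}
    (hnk : n ≠ k) (hnm : n ≠ m) (hkm : k ≠ m) (a b d : ℂ) :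
    0 ≤ conj a * c (n, n) * a + conj a * c (n, k) * b + conj a * c (n, m) * d
      + (conj b * c (k, n) * a + conj b * c (k, k) * b + conj b * c (k, m) * d)
      + (conj d * c (m, n) * a + conj d * c (m, k) * b + conj d * c (m, m) * d) := by
  set f : ℕ →₀ ℂ := Finsupp.single n a + Finsupp.single k b + Finsupp.single m d with hf
  have hfn : f n = a := by simp [hf, Finsupp.single_apply, hnk, hnm, hnk.symm, hnm.symm]
  have hfk : f k = b := by simp [hf, Finsupp.single_apply, hnk, hkm, hnk.symm, hkm.symm]
  have hfm : f m = d := by simp [hf, Finsupp.single_apply, hnm, hkm, hnm.symm, hkm.symm]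
  have hsupp : f.support ⊆ {n, k, m} := by
    refine (Finsupp.support_add.trans (Finset.union_subset_union Finsupp.support_add
      Finsupp.support_single_subset)).trans ?_
    refine Finset.union_subset (Finset.union_subset ?_ ?_) ?_
    · exact Finsupp.support_single_subset.trans (by simp)
    · exact Finsupp.support_single_subset.trans (by simp)
    · simp
  have H := qpos hc {n, k, m} f hsupp
  have hn : n ∉ ({k, m} : Finset ℕ) := by simp [hnk, hnm]
  have hk : k ∉ ({m} : Finset ℕ) := by simp [hkm]
  rw [show ({n, k, m} : Finset ℕ) = insert n (insert k {m}) from rfl] at H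
  simp only [Finset.sum_insert hn, Finset.sum_insert hk, Finset.sum_singleton,
    hfn, hfk, hfm] at H
  exact le_of_le_of_eq H (by ring)

lemma cocycle {c : ℕ × ℕ → ℂ} (hdiag : ∀ n, c (n, n) = 1) (hc : IsPosSemidef c)
    {n k m : ℕ} (h1 : ‖c (n, k)‖ = 1) (h2 : ‖c (k, m)‖ = 1) :
    c (n, m) = c (n, k) * c (k, m) := by
  have hα : c (n, k) * conj (c (n, k)) = 1 := by
    rw [Complex.mul_conj, Complex.normSq_eq_norm_sq, h1]; norm_num
  rcases eq_or_ne n k with rfl | hnk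
  · rw [hdiag, one_mul]
  rcases eq_or_ne k m with rfl | hkm
  · rw [hdiag, mul_one]
  rcases eq_or_ne n m with rfl | hnm
  · rw [hdiag, herm hdiag hc n k, hα]
  set w : ℂ := c (k, m) - conj (c (n, k)) * c (n, m) with hw
  have H := q3 hc hnk hnm hkm (-(c (n, k))) 1 (-(conj w))
  rw [hdiag, hdiag, hdiag, herm hdiag hc n k, herm hdiag hc n m, herm hdiag hc k m] at H
  have key : conj (-(c (n, k))) * 1 * -(c (n, k)) + conj (-(c (n, k))) * c (n, k) * 1
      + conj (-(c (n, k))) * c (n, m) * -(conj w)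
      + (conj (1:ℂ) * conj (c (n, k)) * -(c (n, k)) + conj (1:ℂ) * 1 * 1
        + conj (1:ℂ) * c (k, m) * -(conj w))
      + (conj (-(conj w)) * conj (c (n, m)) * -(c (n, k))
        + conj (-(conj w)) * conj (c (k, m)) * 1 + conj (-(conj w)) * 1 * -(conj w))
      = -(w * conj w) := by
    rw [hw]
    simp only [map_sub, map_mul, map_neg, map_one, Complex.conj_conj, one_mul, mul_one]
    linear_combination -hα
  rw [key, Complex.mul_conj] at H
  have hw0 : w = 0 := by
    rw [Complex.le_def] at H
    have := H.1
    simp only [Complex.zero_re, Complex.neg_re, Complex.ofReal_re] at this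
    exact Complex.normSq_eq_zero.mp (le_antisymm (by linarith) (Complex.normSq_nonneg w))
  have : c (k, m) = conj (c (n, k)) * c (n, m) := by
    have := sub_eq_zero.mp hw0
    exact this
  calc c (n, m) = (c (n, k) * conj (c (n, k))) * c (n, m) := by rw [hα, one_mul]
    _ = c (n, k) * c (k, m) := by rw [this]; ring

theorem stmt19 (c d : ℕ × ℕ → ℂ) (hc : IsPhaseMatrix c) (hd : IsPhaseMatrix d)
    (ef : ℕ × ℕ → ℂ) (hef : IsPhaseMatrix ef)
    (f : ℕ × ℕ → ℂ) (hf : IsPhaseMatrix f)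
    (h1 : ∀ n m : ℕ, c (n, m) = d (n, m) * ef (n, m))
    (h2 : ∀ n m : ℕ, d (n, m) = c (n, m) * f (n, m)) :
    ∃ υ : ℕ → ℝ, ∀ n m : ℕ,
      c (n, m) = d (n, m) * Complex.exp (Complex.I * ((υ n : ℂ) - (υ m : ℂ))) := by
  obtain ⟨hed, hep⟩ := hef
  obtain ⟨hfd, hfp⟩ := hf
  have hsymm : ∀ {n m : ℕ}, ‖ef (n, m)‖ = 1 → ‖ef (m, n)‖ = 1 := by
    intro n m h
    rw [herm hed hep n m, Complex.norm_conj]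
    exact h
  have htrans : ∀ {n k m : ℕ}, ‖ef (n, k)‖ = 1 → ‖ef (k, m)‖ = 1 →
      ‖ef (n, m)‖ = 1 := by
    intro n k m ha hb
    rw [cocycle hed hep ha hb, norm_mul, ha, hb, mul_one]
  set rep : ℕ → ℕ := fun n => sInf {m | ‖ef (n, m)‖ = 1} with hrepdef
  have hrep : ∀ n, ‖ef (n, rep n)‖ = 1 := by
    intro n
    exact Nat.sInf_mem (⟨n, by simp [hed n]⟩ : {m | ‖ef (n, m)‖ = 1}.Nonempty)
  have hrepeq : ∀ n m, ‖ef (n, m)‖ = 1 → rep n = rep m := by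
    intro n m h
    have : {k | ‖ef (n, k)‖ = 1} = {k | ‖ef (m, k)‖ = 1} :=
      Set.ext fun k => ⟨fun h' => htrans (hsymm h) h', fun h' => htrans h h'⟩
    simp only [hrepdef, this]
  refine ⟨fun n => -(ef (rep n, n)).arg, ?_⟩
  intro n m
  rcases eq_or_ne (d (n, m)) 0 with hd0 | hd0
  · rw [h1 n m, hd0, zero_mul, zero_mul]
  have hc0 : c (n, m) ≠ 0 := fun h => hd0 (by rw [h2 n m, h, zero_mul])
  have habs : ‖ef (n, m)‖ = 1 := by
    have e1 : ‖c (n, m)‖ = ‖d (n, m)‖ * ‖ef (n, m)‖ := by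
      rw [h1 n m, norm_mul]
    have e2 : ‖d (n, m)‖ = ‖c (n, m)‖ * ‖f (n, m)‖ := by
      rw [h2 n m, norm_mul]
    have b1 := abs_le_one hed hep n m
    have b2 := abs_le_one hfd hfp n m
    have hcpos : 0 < ‖c (n, m)‖ := norm_pos_iff.mpr hc0
    have he0 : 0 ≤ ‖ef (n, m)‖ := norm_nonneg _
    have hf0 : 0 ≤ ‖f (n, m)‖ := norm_nonneg _
    have hfe : ‖f (n, m)‖ * ‖ef (n, m)‖ = 1 := by
      apply mul_left_cancel₀ (ne_of_gt hcpos)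
      rw [mul_one]
      nlinarith
    have : (1 : ℝ) ≤ ‖ef (n, m)‖ := by nlinarith
    linarith
  have hrn : ‖ef (rep n, n)‖ = 1 := hsymm (hrep n)
  have hrm : ‖ef (rep n, m)‖ = 1 := by
    rw [hrepeq n m habs]; exact hsymm (hrep m)
  have hcoc : ef (n, m) = ef (n, rep n) * ef (rep n, m) :=
    cocycle hed hep (hsymm hrn) hrm
  set a1 : ℝ := (ef (rep n, n)).arg with ha1
  set a2 : ℝ := (ef (rep n, m)).arg with ha2
  have hz1 : ef (rep n, n) = Complex.exp ((a1 : ℂ) * Complex.I) := by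
    conv_lhs => rw [← Complex.norm_mul_exp_arg_mul_I (ef (rep n, n))]
    rw [hrn, Complex.ofReal_one, one_mul]
  have hz2 : ef (rep n, m) = Complex.exp ((a2 : ℂ) * Complex.I) := by
    conv_lhs => rw [← Complex.norm_mul_exp_arg_mul_I (ef (rep n, m))]
    rw [hrm, Complex.ofReal_one, one_mul]
  have hrnm : rep m = rep n := (hrepeq n m habs).symm
  calc c (n, m) = d (n, m) * ef (n, m) := h1 n m
    _ = d (n, m) * (conj (ef (rep n, n)) * ef (rep n, m)) := by
        rw [hcoc, herm hed hep (rep n) n]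
    _ = d (n, m) * Complex.exp (Complex.I *
        (((-(ef (rep n, n)).arg : ℝ) : ℂ) - ((-(ef (rep m, m)).arg : ℝ) : ℂ))) := by
        rw [hrnm, ← ha1, ← ha2, hz1, hz2, ← Complex.exp_conj, ← Complex.exp_add]
        congr 2
        simp only [map_mul, Complex.conj_ofReal, Complex.conj_I]
        push_cast
        ring
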